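/- Let A : Fin n → C be an array of colors and fix an interval [L, R]. For a color c with sorted occurrence positions, and any index i with A[i] = c at which c has rank m among its occurrences (0-indexed), c occurs at least f more times in positions (i, j] if and only if the (m+f)-th occurrence of c exists and is at most j. -/
import Mathlib


/-- Let `D` be the strictly increasing enumeration of the positions of color `c`
in `A`, and suppose `D m = i`. Then `c` occurs at least `f ≥ 1` more times in
positions `(i, j]` iff the `(m+f)`-th occurrence of `c` exists and is at most `j`. -/
theorem occurrences_rank_query {n k : ℕ} {C : Type*} [DecidableEq C]
    (A : Fin n → C) (c : C) (D : Fin k → Fin n) (hmono : StrictMono D)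
    (hocc : ∀ p : Fin n, A p = c ↔ ∃ a : Fin k, D a = p)
    (m : Fin k) (j : Fin n) (f : ℕ) (hf : 1 ≤ f) :
    f ≤ (Finset.univ.filter (fun p : Fin n => D m < p ∧ p ≤ j ∧ A p = c)).card ↔
      ∃ h : (m : ℕ) + f < k, D ⟨(m : ℕ) + f, h⟩ ≤ j := by
  set T := Finset.univ.filter (fun p : Fin n => D m < p ∧ p ≤ j ∧ A p = c) with hT
  set S := Finset.univ.filter (fun a : Fin k => m < a ∧ D a ≤ j) with hS
  have hTS : T = S.image D := by
    ext p
    simp only [hT, hS, Finset.mem_filter, Finset.mem_image, Finset.mem_univ, true_and]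
    constructor
    · rintro ⟨h1, h2, h3⟩
      obtain ⟨a, ha⟩ := (hocc p).1 h3
      exact ⟨a, ⟨hmono.lt_iff_lt.1 (ha ▸ h1), ha ▸ h2⟩, ha⟩
    · rintro ⟨a, ⟨h1, h2⟩, rfl⟩
      exact ⟨hmono h1, h2, (hocc _).2 ⟨a, rfl⟩⟩
  have hcard : T.card = S.card := by
    rw [hTS, Finset.card_image_of_injective _ hmono.injective]
  rw [hcard]
  constructor
  · intro hle
    have hne : S.Nonempty := Finset.card_pos.1 (lt_of_lt_of_le hf hle)
    set b := S.max' hne with hb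
    have hbS : b ∈ S := S.max'_mem hne
    have hbm : m < b ∧ D b ≤ j := by simpa [hS] using hbS
    have hsub : S ⊆ Finset.Ioc m b := by
      intro a ha
      have := Finset.mem_filter.1 ha
      exact Finset.mem_Ioc.2 ⟨this.2.1, S.le_max' a ha⟩
    have hcard2 : S.card ≤ (b : ℕ) - (m : ℕ) := by
      calc S.card ≤ (Finset.Ioc m b).card := Finset.card_le_card hsub
        _ = (b : ℕ) - (m : ℕ) := Fin.card_Ioc m b
    have hmfb : (m : ℕ) + f ≤ (b : ℕ) := by omega
    have h : (m : ℕ) + f < k := lt_of_le_of_lt hmfb b.isLt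
    refine ⟨h, le_trans ?_ hbm.2⟩
    exact hmono.monotone (by simpa [Fin.le_def] using hmfb)
  · rintro ⟨h, hj⟩
    have hsub : Finset.Ioc m ⟨(m : ℕ) + f, h⟩ ⊆ S := by
      intro a ha
      rw [Finset.mem_Ioc] at ha
      refine Finset.mem_filter.2 ⟨Finset.mem_univ _, ha.1, le_trans (hmono.monotone ha.2) hj⟩
    calc f = (Finset.Ioc m ⟨(m : ℕ) + f, h⟩).card := by
            rw [Fin.card_Ioc]; simp
      _ ≤ S.card := Finset.card_le_card hsub
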